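/- Let (L(s), P(s))_{s∈S} be a solution of the cmKP hierarchy and W(s) = (w_0(s) + w_1(s)∂^{−1} + ⋯)∂^{n_s} a corresponding dressing operator. Then L^mkp(s) := w_0(s)^{−1}L(s)w_0(s) and P^mkp(s) := w_0(s+1)^{−1}P(s)w_0(s) constitute a solution of the mKP hierarchy, and W^mkp(s) := w_0(s)^{−1}W(s) is its dressing operator. -/

import Mathlib

/-!
Write `w = w₀(s)`. The gauge `A ↦ w⁻¹ A w` respects products because the product of
microdifferential operators is associative, so it carries `L W = W ∂`, `P W = W(s+1)` and
the intertwining relation over to the new operators. Comparing the coefficients of `∂^{n_s}`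
in `L W = W ∂` gives `u₁ w + ∂ₓ w = 0`, which kills the constant term of `w⁻¹ L w`;
comparing them in `∂ₙ W = B^c_n W` gives `∂ₙ w = -(Lⁿ)₀ w`. Differentiating a gauged
operator therefore adds the multiplication operator `(Lⁿ)₀` to the gauged `(Lⁿ)_{>0}`, and
`w⁻¹ (Lⁿ)_{>0} w + (Lⁿ)₀ = (w⁻¹ Lⁿ w)_{≥0}`: the cmKP Lax and evolution equations become
the mKP ones.
-/


noncomputable section
namespace CmKPPaper

open scoped BigOperators

/-- Ring of "functions of `x` and `t = (t₁, t₂, …)`", modelled as formal power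
series in countably many variables, where variable `0` is `x` and variable
`n ≥ 1` is `tₙ`. -/
abbrev Func : Type := MvPowerSeries ℕ ℝ

/-- Formal partial derivative with respect to the `i`-th variable. -/
def D (i : ℕ) (f : Func) : Func :=
  fun m => ((m i : ℝ) + 1) * f (m + Finsupp.single i 1)

/-- `∂/∂x`. -/
def dx : Func → Func := D 0

/-- iterated `∂/∂x`. -/
def dxI (k : ℕ) : Func → Func := dx^[k]

/-- Generalized binomial coefficient `C(m, k)` for `m : ℤ`. -/
def gch (m : ℤ) (k : ℕ) : ℝ :=
  (∏ i ∈ Finset.range k, ((m : ℝ) - (i : ℝ))) / (Nat.factorial k : ℝ)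

/-- Microdifferential operators `∑_{j ≤ N} a_j ∂^j` in `∂ = ∂/∂x`, encoded by
their coefficient families `j ↦ a_j`. -/
abbrev MDO : Type := ℤ → Func

/-- Product of microdifferential operators (Leibniz rule with generalized
binomial coefficients). -/
def mul (A B : MDO) : MDO := fun j =>
  ∑ᶠ p : ℤ × ℕ, gch p.1 p.2 • (A p.1 * dxI p.2 (B (j - p.1 + (p.2 : ℤ))))

def one : MDO := fun j => if j = 0 then 1 else 0
def del : MDO := fun j => if j = 1 then 1 else 0
def delInv : MDO := fun j => if j = -1 then 1 else 0

/-- multiplication operator by a function. -/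
def cOp (f : Func) : MDO := fun j => if j = 0 then f else 0

def npow (A : MDO) : ℕ → MDO
  | 0 => one
  | n + 1 => mul A (npow A n)

/-- Commutator. -/
def comm (A B : MDO) : MDO := mul A B - mul B A

/-- derivative `∂/∂tᵢ` applied to all coefficients of an operator. -/
def opD (i : ℕ) (A : MDO) : MDO := fun j => D i (A j)

/-- `A_{>0}`. -/
def pos (A : MDO) : MDO := fun j => if 0 < j then A j else 0
/-- `A_{≥0}`. -/
def nonneg (A : MDO) : MDO := fun j => if 0 ≤ j then A j else 0

/-- Formal adjoint `A^*` (`x^* = x`, `∂^* = -∂`). -/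
def adj (A : MDO) : MDO := fun j =>
  ∑ᶠ k : ℕ, (((-1 : ℝ) ^ (j + (k : ℤ))) * gch (j + (k : ℤ)) k) • dxI k (A (j + (k : ℤ)))

/-- `L` has the cmKP form `∂ + u₁ + u₂∂⁻¹ + ⋯`. -/
def IsL (L : MDO) : Prop := L 1 = 1 ∧ ∀ j, 1 < j → L j = 0

/-- `Bₙ = (Lⁿ)_{>0}`. -/
def Bop (L : MDO) (n : ℕ) : MDO := pos (npow L n)

/-- `B^c_n = Bₙ - Lⁿ = -(Lⁿ)_{≤0}`. -/
def Bc (L : MDO) (n : ℕ) : MDO := Bop L n - npow L n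


/-- `S` is a set of consecutive integers. -/
def Consecutive (S : Set ℤ) : Prop :=
  ∀ a c, a ∈ S → c ∈ S → ∀ b, a ≤ b → b ≤ c → b ∈ S

/-- `(L(s), P(s))_{s ∈ S}` is a solution of the cmKP hierarchy (discrete
parameters `(n_s)`, `m_s = n_{s+1} - n_s ≥ 1`).  Here `IsUnit` of the leading
coefficient of `P(s)` encodes that the function `p₀(s)` is nonvanishing. -/
structure CmKPSol (S : Set ℤ) (nn : ℤ → ℤ) (L P : ℤ → MDO) : Prop where
  consec : Consecutive S
  hmono : ∀ s, s ∈ S → s + 1 ∈ S → nn s < nn (s + 1)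
  hL : ∀ s ∈ S, IsL (L s)
  hPhigh : ∀ s, s ∈ S → s + 1 ∈ S → ∀ j, nn (s + 1) - nn s < j → P s j = 0
  hPlow : ∀ s, s ∈ S → s + 1 ∈ S → ∀ j, j ≤ 0 → P s j = 0
  hP0 : ∀ s, s ∈ S → s + 1 ∈ S → IsUnit (P s (nn (s + 1) - nn s))
  lax : ∀ s ∈ S, ∀ n : ℕ, 1 ≤ n → opD n (L s) = comm (Bop (L s) n) (L s)
  inter : ∀ s, s ∈ S → s + 1 ∈ S → mul (L (s + 1)) (P s) = mul (P s) (L s)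
  evol : ∀ s, s ∈ S → s + 1 ∈ S → ∀ n : ℕ, 1 ≤ n →
    opD n (P s) = mul (Bop (L (s + 1)) n) (P s) - mul (P s) (Bop (L s) n)

/-- `W(s) = (w₀(s) + w₁(s)∂⁻¹ + ⋯)∂^{n_s}`, `w₀ ≠ 0`, is a dressing operator
for the solution `(L(s), P(s))_{s ∈ S}` of the cmKP hierarchy. -/
structure CmKPDress (S : Set ℤ) (nn : ℤ → ℤ) (L P W : ℤ → MDO) : Prop where
  hform : ∀ s ∈ S, ∀ j, nn s < j → W s j = 0
  hw0 : ∀ s ∈ S, IsUnit (W s (nn s))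
  hLW : ∀ s ∈ S, mul (L s) (W s) = mul (W s) del
  hPW : ∀ s, s ∈ S → s + 1 ∈ S → mul (P s) (W s) = W (s + 1)
  hDW : ∀ s ∈ S, ∀ n : ℕ, 1 ≤ n → opD n (W s) = mul (Bc (L s) n) (W s)

/-- `L` has the mKP form `∂ + u₂∂⁻¹ + u₃∂⁻² + ⋯`. -/
def IsLmkp (L : MDO) : Prop := L 1 = 1 ∧ L 0 = 0 ∧ ∀ j, 1 < j → L j = 0

/-- `B^mkp_n = (Lⁿ)_{≥0}`. -/
def Bmkp (L : MDO) (n : ℕ) : MDO := nonneg (npow L n)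

/-- `B^{mkp,c}_n = B^mkp_n - Lⁿ = -(Lⁿ)_{<0}`. -/
def Bcmkp (L : MDO) (n : ℕ) : MDO := Bmkp L n - npow L n

/-- `(L(s), P(s))_{s ∈ S}` is a solution of the mKP hierarchy, with monic
`P(s) = ∂^{m_s} + q₁(s)∂^{m_s-1} + ⋯ + q_{m_s}(s)`. -/
structure MkpSol (S : Set ℤ) (nn : ℤ → ℤ) (L P : ℤ → MDO) : Prop where
  consec : Consecutive S
  hmono : ∀ s, s ∈ S → s + 1 ∈ S → nn s < nn (s + 1)
  hL : ∀ s ∈ S, IsLmkp (L s)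
  hPhigh : ∀ s, s ∈ S → s + 1 ∈ S → ∀ j, nn (s + 1) - nn s < j → P s j = 0
  hPlow : ∀ s, s ∈ S → s + 1 ∈ S → ∀ j, j < 0 → P s j = 0
  hPmonic : ∀ s, s ∈ S → s + 1 ∈ S → P s (nn (s + 1) - nn s) = 1
  lax : ∀ s ∈ S, ∀ n : ℕ, 1 ≤ n → opD n (L s) = comm (Bmkp (L s) n) (L s)
  inter : ∀ s, s ∈ S → s + 1 ∈ S → mul (L (s + 1)) (P s) = mul (P s) (L s)
  evol : ∀ s, s ∈ S → s + 1 ∈ S → ∀ n : ℕ, 1 ≤ n →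
    opD n (P s) = mul (Bmkp (L (s + 1)) n) (P s) - mul (P s) (Bmkp (L s) n)

/-- `W(s) = (1 + w₁(s)∂⁻¹ + ⋯)∂^{n_s}` is a dressing operator for a solution of
the mKP hierarchy. -/
structure MkpDress (S : Set ℤ) (nn : ℤ → ℤ) (L P W : ℤ → MDO) : Prop where
  hform : ∀ s ∈ S, ∀ j, nn s < j → W s j = 0
  htop : ∀ s ∈ S, W s (nn s) = 1
  hLW : ∀ s ∈ S, mul (L s) (W s) = mul (W s) del
  hPW : ∀ s, s ∈ S → s + 1 ∈ S → mul (P s) (W s) = W (s + 1)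
  hDW : ∀ s ∈ S, ∀ n : ℕ, 1 ≤ n → opD n (W s) = mul (Bcmkp (L s) n) (W s)


theorem finsum_eq_finsum_comp {α β M : Type*} [AddCommMonoid M] {f : β → M} {g : α → β}
    (hg : Function.Injective g) (hf : ∀ b ∉ Set.range g, f b = 0) :
    ∑ᶠ b, f b = ∑ᶠ a, f (g a) := by
  rw [← finsum_mem_range hg, ← finsum_mem_univ]
  exact finsum_mem_inter_support_eq' f _ _ fun b hb =>
    iff_of_true trivial (by_contra fun h => hb (hf b h))

open MvPowerSeries in
theorem D_eq_pderiv (i : ℕ) : D i = pderiv ℝ i := by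
  funext f; ext m
  rw [coeff_pderiv, mul_comm]; rfl

theorem D_mul (i : ℕ) (f g : Func) : D i (f * g) = D i f * g + f * D i g := by
  rw [D_eq_pderiv, Derivation.leibniz, smul_eq_mul, smul_eq_mul, add_comm, mul_comm g]

theorem D_one (i : ℕ) : D i 1 = 0 := by
  rw [D_eq_pderiv]; exact MvPowerSeries.pderiv_one

theorem D_zero (i : ℕ) : D i 0 = 0 := by
  rw [D_eq_pderiv]; exact map_zero _

theorem D_comm (i j : ℕ) (f : Func) : D i (D j f) = D j (D i f) := by
  funext m
  simp only [D, Finsupp.add_apply, Finsupp.single_apply]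
  rw [add_right_comm m (Finsupp.single j 1) (Finsupp.single i 1)]
  rcases eq_or_ne i j with h | h
  · subst h; ring
  · rw [if_neg h, if_neg (Ne.symm h)]
    push_cast
    ring

theorem D_ringInverse {w γ : Func} (hw : IsUnit w) {i : ℕ} (hD : D i w = γ * w) :
    D i (Ring.inverse w) = -γ * Ring.inverse w := by
  have h0 : D i (Ring.inverse w) * w + Ring.inverse w * (γ * w) = 0 := by
    rw [← hD, ← D_mul, Ring.inverse_mul_cancel w hw, D_one]
  linear_combination Ring.inverse w * h0 -
    (D i (Ring.inverse w) + γ * Ring.inverse w) * Ring.mul_inverse_cancel w hw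

theorem dxI_eq_pow (k : ℕ) : dxI k = ⇑((MvPowerSeries.pderiv ℝ 0).toLinearMap ^ k) := by
  rw [dxI, dx, D_eq_pderiv, Module.End.coe_pow]; rfl

theorem dxI_add (k : ℕ) (f g : Func) : dxI k (f + g) = dxI k f + dxI k g := by
  rw [dxI_eq_pow, map_add]

theorem dxI_smul (k : ℕ) (r : ℝ) (f : Func) : dxI k (r • f) = r • dxI k f := by
  rw [dxI_eq_pow, map_smul]

theorem dxI_zero (k : ℕ) : dxI k 0 = 0 := by
  rw [dxI_eq_pow, map_zero]

theorem dxI_neg (k : ℕ) (f : Func) : dxI k (-f) = -dxI k f := by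
  rw [dxI_eq_pow, map_neg]

theorem dxI_sum (k : ℕ) {α : Type*} (s : Finset α) (F : α → Func) :
    dxI k (∑ a ∈ s, F a) = ∑ a ∈ s, dxI k (F a) := by
  rw [dxI_eq_pow, map_sum]

theorem dxI_add_apply (a b : ℕ) (f : Func) : dxI (a + b) f = dxI a (dxI b f) :=
  Function.iterate_add_apply dx a b f

theorem dxI_succ (k : ℕ) (f : Func) : dxI (k + 1) f = dx (dxI k f) :=
  Function.iterate_succ_apply' dx k f

theorem dxI_one (k : ℕ) (hk : 1 ≤ k) : dxI k 1 = 0 := by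
  obtain ⟨n, rfl⟩ := Nat.exists_eq_add_of_le' hk
  rw [dxI_add_apply, show dxI 1 1 = D 0 1 from rfl, D_one, dxI_zero]

theorem D_dxI (i k : ℕ) (f : Func) : D i (dxI k f) = dxI k (D i f) :=
  Function.Commute.iterate_right (f := D i) (g := dx) (fun g => D_comm i 0 g) k f

theorem dxI_mul (n : ℕ) (f g : Func) :
    dxI n (f * g) = ∑ a ∈ Finset.range (n + 1), n.choose a • (dxI a f * dxI (n - a) g) := by
  induction n with
  | zero => simp [dxI]
  | succ n ih =>
    rw [Finset.sum_choose_succ_nsmul (fun a b => dxI a f * dxI b g), dxI_succ, ih, dx,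
      ← Finset.sum_add_distrib, D_eq_pderiv, map_sum]
    refine Finset.sum_congr rfl fun a ha => ?_
    rw [map_nsmul, ← D_eq_pderiv, D_mul, smul_add, add_comm, show D 0 = dx from rfl, ← dxI_succ,
      ← dxI_succ, Nat.sub_add_comm (Finset.mem_range_succ_iff.mp ha)]

theorem gch_eq_choose (m : ℤ) (k : ℕ) : gch m k = ((Ring.choose m k : ℤ) : ℝ) := by
  have h := Ring.descPochhammer_eq_factorial_smul_choose m k
  rw [← Polynomial.eval_eq_smeval, descPochhammer_eval_eq_prod_range, nsmul_eq_mul] at h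
  rw [gch, div_eq_iff (by positivity), mul_comm]
  exact_mod_cast h

theorem gch_zero_right (m : ℤ) : gch m 0 = 1 := by
  simp [gch_eq_choose]

theorem gch_eq_zero {m : ℤ} {k : ℕ} (h0 : 0 ≤ m) (h : m < k) : gch m k = 0 := by
  lift m to ℕ using h0
  rw [gch_eq_choose, Ring.choose_natCast, Nat.choose_eq_zero_of_lt (by omega)]
  simp

theorem gch_choose_mul (p : ℤ) (a b : ℕ) :
    gch p (a + b) * ((a + b).choose a : ℝ) = gch p a * gch (p - a) b := by
  have h := Ring.choose_smul_choose p (Nat.le_add_right a b)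
  rw [Nat.add_sub_cancel_left, nsmul_eq_mul] at h
  simp only [gch_eq_choose, mul_comm _ ((a + b).choose a : ℝ)]
  exact_mod_cast h

theorem sum_range_gch_mul_gch (x y : ℤ) (c : ℕ) :
    ∑ b ∈ Finset.range (c + 1), gch x b * gch y (c - b) = gch (x + y) c := by
  rw [gch_eq_choose, Ring.add_choose_eq c (Commute.all x y),
    Finset.Nat.sum_antidiagonal_eq_sum_range_succ_mk]
  push_cast [gch_eq_choose]
  rfl

theorem sum_range_gch_mul_choose_mul_gch (p q : ℤ) (a c : ℕ) :
    ∑ b ∈ Finset.range (c + 1), gch p (a + b) * ((a + b).choose a : ℝ) * gch q (c - b)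
      = gch p a * gch (p - a + q) c := by
  simp_rw [gch_choose_mul, mul_assoc, ← Finset.mul_sum, sum_range_gch_mul_gch]

def mulTerm (A B : MDO) (j : ℤ) (p : ℤ × ℕ) : Func :=
  gch p.1 p.2 • (A p.1 * dxI p.2 (B (j - p.1 + p.2)))

theorem mul_apply (A B : MDO) (j : ℤ) : mul A B j = ∑ᶠ p, mulTerm A B j p := rfl

theorem mulTerm_of_left_eq_zero {A B : MDO} {j : ℤ} {p : ℤ × ℕ} (h : A p.1 = 0) :
    mulTerm A B j p = 0 := by
  simp [mulTerm, h]

theorem mulTerm_of_right_eq_zero {A B : MDO} {j : ℤ} {p : ℤ × ℕ}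
    (h : B (j - p.1 + p.2) = 0) : mulTerm A B j p = 0 := by
  simp [mulTerm, h, dxI_zero]

theorem mul_apply_eq_sum {A B : MDO} {j : ℤ} (T : Finset (ℤ × ℕ))
    (hT : ∀ p ∉ T, mulTerm A B j p = 0) : mul A B j = ∑ p ∈ T, mulTerm A B j p :=
  finsum_eq_sum_of_support_subset _ fun p hp => by_contra fun hpT => hp (hT p hpT)

/-- `mul` is a `finsum`, which is `0` when its support is infinite; bounding the orders of both
factors is what makes it a genuine finite sum. -/
def OrderLE (N : ℤ) (A : MDO) : Prop := ∀ j, N < j → A j = 0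

theorem OrderLE.mono {N M : ℤ} {A : MDO} (hA : OrderLE N A) (h : N ≤ M) : OrderLE M A :=
  fun j hj => hA j (by omega)

/-- Indices `(p, k)` contributing to the coefficients `j' ≥ j` of a product of operators of
orders `≤ NA` and `≤ NB`. -/
def box (NA NB j : ℤ) : Finset (ℤ × ℕ) :=
  Finset.Icc (j - NB) NA ×ˢ Finset.range ((NA + NB - j).toNat + 1)

theorem mul_apply_eq_sum_box {NA NB : ℤ} {A B : MDO} (hA : OrderLE NA A) (hB : OrderLE NB B)
    {j j' : ℤ} (h : j ≤ j') : mul A B j' = ∑ p ∈ box NA NB j, mulTerm A B j' p := by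
  refine mul_apply_eq_sum _ fun p hp => ?_
  by_cases h1 : NA < p.1
  · exact mulTerm_of_left_eq_zero (hA _ h1)
  refine mulTerm_of_right_eq_zero (hB _ ?_)
  simp only [box, Finset.mem_product, Finset.mem_Icc, Finset.mem_range, not_and_or] at hp
  have := Int.self_le_toNat (NA + NB - j)
  omega

theorem OrderLE.mul {NA NB : ℤ} {A B : MDO} (hA : OrderLE NA A) (hB : OrderLE NB B) :
    OrderLE (NA + NB) (mul A B) := by
  intro j hj
  rw [mul_apply_eq_sum ∅ fun p _ => ?_, Finset.sum_empty]
  rcases le_or_gt p.1 NA with h1 | h1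
  · exact mulTerm_of_right_eq_zero (hB _ (by omega))
  · exact mulTerm_of_left_eq_zero (hA _ h1)

theorem orderLE_cOp (f : Func) : OrderLE 0 (cOp f) := by
  intro j hj; simp [cOp]; omega

theorem orderLE_one : OrderLE 0 one := orderLE_cOp 1

theorem orderLE_del : OrderLE 1 del := by
  intro j hj; simp [del]; omega

theorem OrderLE.opD {N : ℤ} {A : MDO} (hA : OrderLE N A) (i : ℕ) : OrderLE N (opD i A) := by
  intro j hj; simp [CmKPPaper.opD, hA j hj, D_zero]

theorem OrderLE.pos {N : ℤ} {A : MDO} (hA : OrderLE N A) : OrderLE N (pos A) := by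
  intro j hj; simp [CmKPPaper.pos, hA j hj]

theorem OrderLE.add {N : ℤ} {A B : MDO} (hA : OrderLE N A) (hB : OrderLE N B) :
    OrderLE N (A + B) := by
  intro j hj; simp [hA j hj, hB j hj]

theorem OrderLE.neg {N : ℤ} {A : MDO} (hA : OrderLE N A) : OrderLE N (-A) := by
  intro j hj; simp [hA j hj]

theorem OrderLE.npow {N : ℤ} {A : MDO} (hA : OrderLE N A) (n : ℕ) :
    OrderLE (n * N) (npow A n) := by
  induction n with
  | zero => exact orderLE_one.mono (by simp)
  | succ n ih => exact (hA.mul ih).mono (by push_cast; linarith)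

theorem OrderLE.Bop {N : ℤ} {L : MDO} (hL : OrderLE N L) (n : ℕ) : OrderLE (n * N) (Bop L n) :=
  (hL.npow n).pos

theorem orderLE_sub_pos (X : MDO) : OrderLE 0 (X - pos X) := by
  intro j hj; simp [CmKPPaper.pos, hj]

theorem orderLE_Bc (L : MDO) (n : ℕ) : OrderLE 0 (Bc L n) := by
  intro j hj; simp [Bc, Bop, CmKPPaper.pos, hj]

theorem mul_cOp_left (f : Func) (B : MDO) : mul (cOp f) B = fun j => f * B j := by
  funext j
  rw [mul_apply_eq_sum {(0, 0)} fun p hp => ?_, Finset.sum_singleton]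
  · simp [mulTerm, cOp, gch_zero_right, dxI]
  rcases eq_or_ne p.1 0 with h1 | h1
  · have h2 : p.2 ≠ 0 := fun h2 => hp (by simp [Prod.ext_iff, h1, h2])
    simp [mulTerm, h1, gch_eq_zero le_rfl (by omega : (0 : ℤ) < p.2)]
  · exact mulTerm_of_left_eq_zero (by simp [cOp, h1])

theorem mul_one_left (B : MDO) : mul one B = B := by
  rw [show one = cOp 1 from rfl, mul_cOp_left]
  simp

theorem mul_cOp_cOp (f g : Func) : mul (cOp f) (cOp g) = cOp (f * g) := by
  rw [mul_cOp_left]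
  funext j
  by_cases h : j = 0 <;> simp [cOp, h]

theorem mul_cOp_mul (f g : Func) (A : MDO) :
    mul (cOp (f * g)) A = mul (cOp f) (mul (cOp g) A) := by
  simp only [mul_cOp_left, mul_assoc]

theorem cOp_neg (f : Func) : cOp (-f) = -cOp f := by
  funext j
  by_cases h : j = 0 <;> simp [cOp, h]

theorem mul_cOp_right_apply {N : ℤ} {A : MDO} (hA : OrderLE N A) (f : Func) (j : ℤ) :
    mul A (cOp f) j = ∑ k ∈ Finset.range ((N - j).toNat + 1),
      gch (j + k) k • (A (j + k) * dxI k f) := by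
  have hinj : Set.InjOn (fun k : ℕ => (j + k, k)) (Finset.range ((N - j).toNat + 1)) :=
    fun a _ b _ h => (Prod.ext_iff.mp h).2
  rw [mul_apply_eq_sum _ fun p hp => ?_, Finset.sum_image hinj]
  · refine Finset.sum_congr rfl fun k _ => ?_
    simp [mulTerm, cOp]
  rcases eq_or_ne p.1 (j + p.2) with h1 | h1
  · refine mulTerm_of_left_eq_zero (hA _ ?_)
    have hk : p.2 ∉ Finset.range ((N - j).toNat + 1) := fun hk =>
      hp (Finset.mem_image.mpr ⟨p.2, hk, by rw [← h1]⟩)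
    rw [Finset.mem_range, not_lt] at hk
    have := Int.self_le_toNat (N - j)
    omega
  · exact mulTerm_of_right_eq_zero (by simp only [cOp]; rw [if_neg (by omega)])

theorem mul_one_right {N : ℤ} {A : MDO} (hA : OrderLE N A) : mul A one = A := by
  funext j
  rw [show one = cOp 1 from rfl, mul_cOp_right_apply hA, Finset.sum_eq_single 0]
  · simp [gch_zero_right, dxI]
  · intro k _ hk
    rw [dxI_one k (by omega), mul_zero, smul_zero]
  · simp

theorem mul_del_right (A : MDO) : mul A del = fun j => A (j - 1) := by
  funext j
  rw [mul_apply_eq_sum {(j - 1, 0)} fun p hp => ?_, Finset.sum_singleton]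
  · simp [mulTerm, del, gch_zero_right, dxI]
  rcases eq_or_ne p.1 (j - 1 + p.2) with h1 | h1
  · have h2 : p.2 ≠ 0 := fun h2 => hp (by simp [Prod.ext_iff, h1, h2])
    rw [mulTerm, del, if_pos (by omega), dxI_one _ (by omega), mul_zero, smul_zero]
  · exact mulTerm_of_right_eq_zero (by simp only [del]; rw [if_neg (by omega)])

theorem mul_apply_add_of_orderLE {M N : ℤ} {A B : MDO} (hA : OrderLE M A) (hB : OrderLE N B) :
    mul A B (M + N) = A M * B N := by
  rw [mul_apply_eq_sum {(M, 0)} fun p hp => ?_, Finset.sum_singleton]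
  · simp [mulTerm, gch_zero_right, dxI]
  rcases lt_or_ge M p.1 with h1 | h1
  · exact mulTerm_of_left_eq_zero (hA _ h1)
  · refine mulTerm_of_right_eq_zero (hB _ ?_)
    have : p ≠ (M, 0) := fun h => hp (by simp [h])
    simp only [ne_eq, Prod.ext_iff, not_and_or] at this
    omega

theorem mul_apply_add_sub_one_of_orderLE {M N : ℤ} {A B : MDO} (hA : OrderLE M A)
    (hB : OrderLE N B) :
    mul A B (M + N - 1) = A M * B (N - 1) + A (M - 1) * B N + (M : ℝ) • (A M * dx (B N)) := by
  rw [mul_apply_eq_sum {(M, 0), (M - 1, 0), (M, 1)} fun p hp => ?_]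
  · have hM : (M, 0) ∉ ({(M - 1, 0), (M, 1)} : Finset (ℤ × ℕ)) := by
      simp only [Finset.mem_insert, Finset.mem_singleton, Prod.ext_iff]; omega
    rw [Finset.sum_insert hM, Finset.sum_pair (by simp)]
    simp only [mulTerm, gch_zero_right, one_smul, Nat.cast_zero, Nat.cast_one]
    rw [show M + N - 1 - M + 0 = N - 1 by ring, show M + N - 1 - (M - 1) + 0 = N by ring,
      show M + N - 1 - M + 1 = N by ring, gch_eq_choose, Ring.choose_one_right, add_assoc]
    rfl
  rcases lt_or_ge M p.1 with h1 | h1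
  · exact mulTerm_of_left_eq_zero (hA _ h1)
  · refine mulTerm_of_right_eq_zero (hB _ ?_)
    obtain ⟨p1, p2⟩ := p
    simp only [Finset.mem_insert, Finset.mem_singleton, Prod.ext_iff, not_or, not_and_or] at hp
    omega

theorem mul_add_left {NA NB NC : ℤ} {A B C : MDO} (hA : OrderLE NA A) (hB : OrderLE NB B)
    (hC : OrderLE NC C) : mul (A + B) C = mul A C + mul B C := by
  funext j
  have hA' := hA.mono (le_max_left NA NB)
  have hB' := hB.mono (le_max_right NA NB)
  rw [Pi.add_apply, mul_apply_eq_sum_box (hA'.add hB') hC le_rfl,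
    mul_apply_eq_sum_box hA' hC le_rfl, mul_apply_eq_sum_box hB' hC le_rfl,
    ← Finset.sum_add_distrib]
  refine Finset.sum_congr rfl fun p _ => ?_
  simp only [mulTerm, Pi.add_apply, add_mul, smul_add]

theorem mul_add_right {NA NB NC : ℤ} {A B C : MDO} (hA : OrderLE NA A) (hB : OrderLE NB B)
    (hC : OrderLE NC C) : mul A (B + C) = mul A B + mul A C := by
  funext j
  have hB' := hB.mono (le_max_left NB NC)
  have hC' := hC.mono (le_max_right NB NC)
  rw [Pi.add_apply, mul_apply_eq_sum_box hA (hB'.add hC') le_rfl,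
    mul_apply_eq_sum_box hA hB' le_rfl, mul_apply_eq_sum_box hA hC' le_rfl,
    ← Finset.sum_add_distrib]
  refine Finset.sum_congr rfl fun p _ => ?_
  simp only [mulTerm, Pi.add_apply, dxI_add, mul_add, smul_add]

theorem mul_neg_left (A B : MDO) : mul (-A) B = -mul A B := by
  funext j
  rw [Pi.neg_apply, mul_apply, mul_apply, ← finsum_neg_distrib]
  exact finsum_congr fun p => by simp [mulTerm]

theorem mul_neg_right (A B : MDO) : mul A (-B) = -mul A B := by
  funext j
  rw [Pi.neg_apply, mul_apply, mul_apply, ← finsum_neg_distrib]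
  exact finsum_congr fun p => by simp [mulTerm, dxI_neg]

theorem mul_sub_left {NA NB NC : ℤ} {A B C : MDO} (hA : OrderLE NA A) (hB : OrderLE NB B)
    (hC : OrderLE NC C) : mul (A - B) C = mul A C - mul B C := by
  rw [sub_eq_add_neg, sub_eq_add_neg, mul_add_left hA hB.neg hC, mul_neg_left]

theorem opD_mul {NA NB : ℤ} {A B : MDO} (hA : OrderLE NA A) (hB : OrderLE NB B) (i : ℕ) :
    opD i (mul A B) = mul (opD i A) B + mul A (opD i B) := by
  funext j
  rw [Pi.add_apply, opD, mul_apply_eq_sum_box hA hB le_rfl,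
    mul_apply_eq_sum_box (hA.opD i) hB le_rfl, mul_apply_eq_sum_box hA (hB.opD i) le_rfl,
    ← Finset.sum_add_distrib, D_eq_pderiv, map_sum]
  refine Finset.sum_congr rfl fun p _ => ?_
  rw [mulTerm, Derivation.map_smul, ← D_eq_pderiv, D_mul, D_dxI, smul_add]
  rfl

theorem opD_cOp (i : ℕ) (f : Func) : opD i (cOp f) = cOp (D i f) := by
  funext j
  by_cases h : j = 0 <;> simp [opD, cOp, h, D_zero]

section Assoc

variable {NA NB NC : ℤ} {A B C : MDO}

theorem mul_dxI_mul_dxI_eq_zero (hA : OrderLE NA A) (hB : OrderLE NB B) (hC : OrderLE NC C)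
    {p q r : ℤ} (a c : ℕ) (h : NA < p ∨ NB < q ∨ NC < r) :
    A p * (dxI a (B q) * dxI c (C r)) = 0 := by
  rcases h with h | h | h
  · rw [hA p h, zero_mul]
  · rw [hB q h, dxI_zero, zero_mul, mul_zero]
  · rw [hC r h, dxI_zero, mul_zero, mul_zero]

variable (A B C) (j : ℤ)

/-- The coefficient of `∂^j` in both `(AB)C` and `A(BC)` is the sum of these terms. -/
def assocTerm (y : (ℤ × ℕ) × (ℤ × ℕ)) : Func :=
  (gch y.1.1 y.1.2 * gch (y.1.1 - y.1.2 + y.2.1) y.2.2) •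
    (A y.1.1 * (dxI y.1.2 (B y.2.1) * dxI y.2.2 (C (j - y.1.1 + y.1.2 - y.2.1 + y.2.2))))

/-- The terms of `((AB)C)_j`, indexed by `((r, m), (p, a))`. -/
def mulMulLeftTerm (z : (ℤ × ℕ) × (ℤ × ℕ)) : Func :=
  (gch z.1.1 z.1.2 * gch z.2.1 z.2.2) •
    (A z.2.1 * (dxI z.2.2 (B (z.1.1 - z.2.1 + z.2.2)) * dxI z.1.2 (C (j - z.1.1 + z.1.2))))

/-- The terms of `(A(BC))_j` after the Leibniz rule, indexed by `(((p, k), (q, l)), a)`. -/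
def mulMulRightTerm (w : ((ℤ × ℕ) × (ℤ × ℕ)) × ℕ) : Func :=
  (gch w.1.1.1 w.1.1.2 * (gch w.1.2.1 w.1.2.2 * (w.1.1.2.choose w.2 : ℝ))) •
    (A w.1.1.1 * (dxI w.2 (B w.1.2.1) *
      dxI (w.1.1.2 - w.2 + w.1.2.2) (C (j - w.1.1.1 + w.1.1.2 - w.1.2.1 + w.1.2.2))))

/-- `mulMulRightTerm` reindexed by `((p, a), (q, c), b)` with `k = a + b`, `l = c - b`. -/
def regroupedTerm (w : ((ℤ × ℕ) × (ℤ × ℕ)) × ℕ) : Func :=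
  if w.2 ≤ w.1.2.2 then
    (gch w.1.1.1 (w.1.1.2 + w.2) * ((w.1.1.2 + w.2).choose w.1.1.2 : ℝ) *
        gch w.1.2.1 (w.1.2.2 - w.2)) •
      (A w.1.1.1 * (dxI w.1.1.2 (B w.1.2.1) *
        dxI w.1.2.2 (C (j - w.1.1.1 + w.1.1.2 - w.1.2.1 + w.1.2.2))))
  else 0

def assocDegBound (NA NB NC j : ℤ) : ℕ := (NA + NB + NC - j).toNat + 1

def assocBox (NA NB NC j : ℤ) : Finset ((ℤ × ℕ) × (ℤ × ℕ)) :=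
  (Finset.Icc (j - NB - NC) NA ×ˢ Finset.range (assocDegBound NA NB NC j)) ×ˢ
    (Finset.Icc (j - NA - NC) NB ×ˢ Finset.range (assocDegBound NA NB NC j))

variable {A B C j}

theorem assocTerm_eq_zero (hA : OrderLE NA A) (hB : OrderLE NB B) (hC : OrderLE NC C)
    {y : (ℤ × ℕ) × (ℤ × ℕ)} (hy : y ∉ assocBox NA NB NC j) :
    assocTerm A B C j y = 0 := by
  refine smul_eq_zero_of_right _ (mul_dxI_mul_dxI_eq_zero hA hB hC _ _ ?_)
  simp only [assocBox, assocDegBound, Finset.mem_product, Finset.mem_Icc, Finset.mem_range,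
    not_and_or, not_le, not_lt] at hy
  have := Int.self_le_toNat (NA + NB + NC - j)
  omega

theorem regroupedTerm_eq_zero (hA : OrderLE NA A) (hB : OrderLE NB B) (hC : OrderLE NC C)
    {w : ((ℤ × ℕ) × (ℤ × ℕ)) × ℕ}
    (hw : w ∉ assocBox NA NB NC j ×ˢ Finset.range (assocDegBound NA NB NC j)) :
    regroupedTerm A B C j w = 0 := by
  rw [regroupedTerm]
  split_ifs with hb
  · refine smul_eq_zero_of_right _ (mul_dxI_mul_dxI_eq_zero hA hB hC _ _ ?_)
    simp only [assocBox, assocDegBound, Finset.mem_product, Finset.mem_Icc, Finset.mem_range,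
      not_and_or, not_le, not_lt] at hw
    have := Int.self_le_toNat (NA + NB + NC - j)
    omega
  · rfl

theorem mulMulLeftTerm_eq_zero (hA : OrderLE NA A) (hB : OrderLE NB B) (hC : OrderLE NC C)
    {z : (ℤ × ℕ) × (ℤ × ℕ)} (hz : z ∉ box (NA + NB) NC j ×ˢ box NA NB (j - NC)) :
    mulMulLeftTerm A B C j z = 0 := by
  refine smul_eq_zero_of_right _ (mul_dxI_mul_dxI_eq_zero hA hB hC _ _ ?_)
  simp only [box, Finset.mem_product, Finset.mem_Icc, Finset.mem_range, not_and_or, not_le,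
    not_lt] at hz
  have := Int.self_le_toNat (NA + NB + NC - j)
  have := Int.self_le_toNat (NA + NB - (j - NC))
  omega

theorem mulMulRightTerm_eq_zero (hA : OrderLE NA A) (hB : OrderLE NB B) (hC : OrderLE NC C)
    {w : ((ℤ × ℕ) × (ℤ × ℕ)) × ℕ}
    (hw : w ∉ (box NA (NB + NC) j ×ˢ box NB NC (j - NA)) ×ˢ
      Finset.range (assocDegBound NA NB NC j)) :
    mulMulRightTerm A B C j w = 0 := by
  rw [mulMulRightTerm]
  by_cases hk : w.1.1.2 < w.2
  · simp [Nat.choose_eq_zero_of_lt hk]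
  refine smul_eq_zero_of_right _ (mul_dxI_mul_dxI_eq_zero hA hB hC _ _ ?_)
  simp only [box, assocDegBound, Finset.mem_product, Finset.mem_Icc, Finset.mem_range,
    not_and_or, not_le, not_lt] at hw
  have := Int.self_le_toNat (NA + NB + NC - j)
  have := Int.self_le_toNat (NB + NC - (j - NA))
  omega

theorem mul_mul_left_eq_finsum (hA : OrderLE NA A) (hB : OrderLE NB B) (hC : OrderLE NC C) :
    mul (mul A B) C j = ∑ᶠ z, mulMulLeftTerm A B C j z := by
  rw [mul_apply_eq_sum_box (hA.mul hB) hC le_rfl,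
    finsum_eq_sum_of_support_subset _ (s := box (NA + NB) NC j ×ˢ box NA NB (j - NC))
      fun z hz => by_contra fun h => hz (mulMulLeftTerm_eq_zero hA hB hC h),
    Finset.sum_product]
  refine Finset.sum_congr rfl fun ⟨r, m⟩ hrm => ?_
  simp only [box, Finset.mem_product, Finset.mem_Icc, Finset.mem_range] at hrm
  have := Int.self_le_toNat (NA + NB + NC - j)
  rw [mulTerm, mul_apply_eq_sum_box hA hB (by omega : j - NC ≤ r), Finset.sum_mul,
    Finset.smul_sum]
  refine Finset.sum_congr rfl fun ⟨p, a⟩ _ => ?_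
  rw [mulTerm, smul_mul_assoc, smul_smul, mul_assoc]
  rfl

theorem finsum_mulMulLeftTerm (A B C : MDO) (j : ℤ) :
    ∑ᶠ z, mulMulLeftTerm A B C j z = ∑ᶠ y, assocTerm A B C j y := by
  have hinj : Function.Injective fun y : (ℤ × ℕ) × (ℤ × ℕ) =>
      ((y.1.1 - y.1.2 + y.2.1, y.2.2), y.1) := by
    rintro ⟨⟨p, a⟩, q, c⟩ ⟨⟨p', a'⟩, q', c'⟩ h
    simp only [Prod.mk.injEq] at h
    obtain ⟨⟨h1, rfl⟩, rfl, rfl⟩ := h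
    obtain rfl : q = q' := by omega
    rfl
  rw [finsum_eq_finsum_comp hinj fun ⟨⟨r, m⟩, p, a⟩ hz =>
    absurd ⟨((p, a), (r - p + a, m)), by simp⟩ hz]
  refine finsum_congr fun ⟨⟨p, a⟩, q, c⟩ => ?_
  simp only [mulMulLeftTerm, assocTerm, mul_comm (gch (p - a + q) c)]
  congr 4 <;> ring_nf

theorem mul_mul_right_eq_finsum (hA : OrderLE NA A) (hB : OrderLE NB B) (hC : OrderLE NC C) :
    mul A (mul B C) j = ∑ᶠ w, mulMulRightTerm A B C j w := by
  rw [mul_apply_eq_sum_box hA (hB.mul hC) le_rfl,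
    finsum_eq_sum_of_support_subset _ (s := (box NA (NB + NC) j ×ˢ box NB NC (j - NA)) ×ˢ
      Finset.range (assocDegBound NA NB NC j))
      fun w hw => by_contra fun h => hw (mulMulRightTerm_eq_zero hA hB hC h),
    Finset.sum_product, Finset.sum_product]
  refine Finset.sum_congr rfl fun ⟨p, k⟩ hpk => ?_
  simp only [box, Finset.mem_product, Finset.mem_Icc, Finset.mem_range] at hpk
  have := Int.self_le_toNat (NA + NB + NC - j)
  rw [mulTerm, mul_apply_eq_sum_box hB hC (by omega : j - NA ≤ j - p + k), dxI_sum,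
    Finset.mul_sum, Finset.smul_sum]
  refine Finset.sum_congr rfl fun ⟨q, l⟩ _ => ?_
  have hk : k + 1 ≤ assocDegBound NA NB NC j := by rw [assocDegBound]; omega
  rw [← Finset.sum_range_add_sum_Ico _ hk, Finset.sum_eq_zero (s := Finset.Ico _ _) fun a ha => by
      rw [mulMulRightTerm, Nat.choose_eq_zero_of_lt (show k < a by simp at ha; omega)]; simp,
    add_zero, mulTerm, dxI_smul, dxI_mul]
  dsimp only
  rw [Finset.smul_sum, Finset.mul_sum, Finset.smul_sum]
  refine Finset.sum_congr rfl fun a _ => ?_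
  rw [← dxI_add_apply, ← Nat.cast_smul_eq_nsmul ℝ]
  simp only [mulMulRightTerm, mul_smul_comm, smul_smul]

theorem finsum_mulMulRightTerm (A B C : MDO) (j : ℤ) :
    ∑ᶠ w, mulMulRightTerm A B C j w = ∑ᶠ w, regroupedTerm A B C j w := by
  have hinj₁ : Function.Injective fun w : ((ℤ × ℕ) × (ℤ × ℕ)) × ℕ =>
      (((w.1.1.1, w.1.1.2 + w.2), w.1.2), w.1.1.2) := by
    rintro ⟨⟨⟨p, a⟩, q, l⟩, b⟩ ⟨⟨⟨p', a'⟩, q', l'⟩, b'⟩ h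
    simp only [Prod.mk.injEq] at h
    obtain ⟨⟨⟨rfl, h⟩, rfl, rfl⟩, rfl⟩ := h
    obtain rfl : b = b' := by omega
    rfl
  have hinj₂ : Function.Injective fun w : ((ℤ × ℕ) × (ℤ × ℕ)) × ℕ =>
      ((w.1.1, (w.1.2.1, w.2 + w.1.2.2)), w.2) := by
    rintro ⟨⟨⟨p, a⟩, q, l⟩, b⟩ ⟨⟨⟨p', a'⟩, q', l'⟩, b'⟩ h
    simp only [Prod.mk.injEq] at h
    obtain ⟨⟨⟨rfl, rfl⟩, rfl, h⟩, rfl⟩ := h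
    obtain rfl : l = l' := by omega
    rfl
  rw [finsum_eq_finsum_comp hinj₁ ?_,
    finsum_eq_finsum_comp (f := regroupedTerm A B C j) hinj₂ ?_]
  · refine finsum_congr fun ⟨⟨⟨p, a⟩, q, l⟩, b⟩ => ?_
    simp only [mulMulRightTerm, regroupedTerm, Nat.le_add_right, if_true, Nat.add_sub_cancel_left]
    congr 1
    · ring
    · push_cast; ring_nf
  · rintro ⟨⟨⟨p, a⟩, q, c⟩, b⟩ hw
    by_cases hbc : b ≤ c
    · exact absurd ⟨(((p, a), (q, c - b)), b), by simp [Nat.add_sub_cancel' hbc]⟩ hw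
    · simp [regroupedTerm, hbc]
  · rintro ⟨⟨⟨p, k⟩, q, l⟩, a⟩ hw
    by_cases hak : a ≤ k
    · exact absurd ⟨(((p, a), (q, l)), k - a), by simp [Nat.add_sub_cancel' hak]⟩ hw
    · simp [mulMulRightTerm, Nat.choose_eq_zero_of_lt (not_le.mp hak)]

theorem finsum_regroupedTerm (hA : OrderLE NA A) (hB : OrderLE NB B) (hC : OrderLE NC C) :
    ∑ᶠ w, regroupedTerm A B C j w = ∑ᶠ y, assocTerm A B C j y := by
  rw [finsum_eq_sum_of_support_subset _
      (s := assocBox NA NB NC j ×ˢ Finset.range (assocDegBound NA NB NC j))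
      fun w hw => by_contra fun h => hw (regroupedTerm_eq_zero hA hB hC h),
    finsum_eq_sum_of_support_subset _ (s := assocBox NA NB NC j)
      fun y hy => by_contra fun h => hy (assocTerm_eq_zero hA hB hC h),
    Finset.sum_product]
  refine Finset.sum_congr rfl fun ⟨⟨p, a⟩, q, c⟩ hy => ?_
  simp only [assocBox, Finset.mem_product, Finset.mem_range] at hy
  rw [← Finset.sum_range_add_sum_Ico _ (by omega : c + 1 ≤ assocDegBound NA NB NC j),
    Finset.sum_eq_zero (s := Finset.Ico _ _) fun b hb => by
      rw [regroupedTerm, if_neg (show ¬b ≤ c by simp at hb; omega)],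
    add_zero, assocTerm, ← sum_range_gch_mul_choose_mul_gch, Finset.sum_smul]
  refine Finset.sum_congr rfl fun b hb => ?_
  rw [regroupedTerm, if_pos (show b ≤ c by simp at hb; omega)]

theorem mul_assoc_of_orderLE (hA : OrderLE NA A) (hB : OrderLE NB B) (hC : OrderLE NC C) :
    mul (mul A B) C = mul A (mul B C) := by
  funext j
  rw [mul_mul_left_eq_finsum hA hB hC, finsum_mulMulLeftTerm, mul_mul_right_eq_finsum hA hB hC,
    finsum_mulMulRightTerm, finsum_regroupedTerm hA hB hC]

end Assoc

def sandwich (u : Func) (A : MDO) (v : Func) : MDO := mul (cOp u) (mul A (cOp v))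

theorem sandwich_apply (u : Func) (A : MDO) (v : Func) (j : ℤ) :
    sandwich u A v j = u * mul A (cOp v) j := by
  rw [sandwich, mul_cOp_left]

theorem OrderLE.sandwich {N : ℤ} {A : MDO} (hA : OrderLE N A) (u v : Func) :
    OrderLE N (sandwich u A v) :=
  ((orderLE_cOp u).mul ((hA.mul (orderLE_cOp v)).mono (add_zero N).le)).mono (zero_add N).le

theorem sandwich_one_right {N : ℤ} {A : MDO} (hA : OrderLE N A) (u : Func) :
    sandwich u A 1 = mul (cOp u) A := by
  rw [sandwich, show cOp 1 = one from rfl, mul_one_right hA]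

theorem sandwich_sub {NA NB : ℤ} {A B : MDO} (hA : OrderLE NA A) (hB : OrderLE NB B)
    (u v : Func) : sandwich u (A - B) v = sandwich u A v - sandwich u B v := by
  funext j
  simp only [sandwich_apply, Pi.sub_apply, mul_sub_left hA hB (orderLE_cOp v), mul_sub]

theorem sandwich_apply_of_orderLE {N : ℤ} {A : MDO} (hA : OrderLE N A) (u v : Func) :
    sandwich u A v N = u * A N * v := by
  have h := mul_apply_add_of_orderLE hA (orderLE_cOp v)
  rw [add_zero] at h
  rw [sandwich_apply, h, mul_assoc]
  simp [cOp]

theorem sandwich_apply_sub_one_of_orderLE {N : ℤ} {A : MDO} (hA : OrderLE N A) (u v : Func) :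
    sandwich u A v (N - 1) = u * (A (N - 1) * v + (N : ℝ) • (A N * dx v)) := by
  rw [sandwich_apply, ← add_zero N, mul_apply_add_sub_one_of_orderLE hA (orderLE_cOp v)]
  simp [cOp]

theorem sandwich_apply_of_neg {N : ℤ} {A : MDO} (hA : OrderLE N A) (hA₀ : ∀ i ≤ 0, A i = 0)
    (u v : Func) {j : ℤ} (hj : j < 0) : sandwich u A v j = 0 := by
  rw [sandwich_apply, mul_cOp_right_apply hA, Finset.sum_eq_zero fun k _ => ?_, mul_zero]
  rcases le_or_gt (j + k) 0 with h | h
  · rw [hA₀ _ h, zero_mul, smul_zero]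
  · rw [gch_eq_zero h.le (by omega), zero_smul]

theorem sandwich_mul {NA NB : ℤ} {A B : MDO} (hA : OrderLE NA A) (hB : OrderLE NB B)
    {v v' : Func} (hv : v * v' = 1) (u w : Func) :
    sandwich u (mul A B) w = mul (sandwich u A v) (sandwich v' B w) := by
  have hBw : OrderLE NB (mul B (cOp w)) := (hB.mul (orderLE_cOp w)).mono (add_zero NB).le
  change mul (cOp u) (mul (mul A B) (cOp w)) = mul (mul (cOp u) (mul A (cOp v))) (sandwich v' B w)
  rw [mul_assoc_of_orderLE (orderLE_cOp u) ((hA.mul (orderLE_cOp v)).mono (add_zero NA).le)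
    (hB.sandwich v' w), mul_assoc_of_orderLE hA (orderLE_cOp v) (hB.sandwich v' w), sandwich,
    ← mul_assoc_of_orderLE (orderLE_cOp v) (orderLE_cOp v') hBw, mul_cOp_cOp, hv,
    show cOp 1 = one from rfl, mul_one_left, mul_assoc_of_orderLE hA hB (orderLE_cOp w)]

theorem npow_sandwich {N : ℤ} {A : MDO} (hA : OrderLE N A) {w w' : Func} (hw : w * w' = 1)
    (hw' : w' * w = 1) (n : ℕ) : npow (sandwich w' A w) n = sandwich w' (npow A n) w := by
  induction n with
  | zero => rw [npow, npow, sandwich, mul_one_left, mul_cOp_cOp, hw']; rfl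
  | succ n ih => rw [npow, npow, ih, sandwich_mul hA (hA.npow n) hw]

theorem nonneg_sandwich {N : ℤ} {X : MDO} (hX : OrderLE N X) {w w' : Func} (hw' : w' * w = 1) :
    nonneg (sandwich w' X w) = sandwich w' (pos X) w + cOp (X 0) := by
  -- `w' (pos X) w` has no negative powers of `∂`, and `w' (X - pos X) w` has order `≤ 0` with
  -- constant term `w' X₀ w = X₀`.
  have hsplit : sandwich w' X w = sandwich w' (pos X) w + sandwich w' (X - pos X) w := by
    have hN := hX.mono (le_max_left N 0)
    conv_lhs => rw [← add_sub_cancel (pos X) X]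
    rw [sandwich, mul_add_left hN.pos ((orderLE_sub_pos X).mono (le_max_right N 0))
      (orderLE_cOp w)]
    funext j
    simp only [mul_cOp_left, Pi.add_apply, mul_add, sandwich_apply]
  have hlow : ∀ j < 0, sandwich w' (pos X) w j = 0 := fun j hj =>
    sandwich_apply_of_neg hX.pos (fun i hi => if_neg (by omega)) w' w hj
  have htop := sandwich_apply_of_orderLE (orderLE_sub_pos X) w' w
  have hhigh := (orderLE_sub_pos X).sandwich w' w
  funext j
  rw [hsplit, nonneg, Pi.add_apply, Pi.add_apply, cOp]
  rcases lt_trichotomy j 0 with h | rfl | h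
  · simp [h.not_ge, hlow j h, h.ne]
  · rw [htop, if_pos le_rfl, if_pos rfl, mul_right_comm, hw']
    simp [CmKPPaper.pos]
  · simp [h.le, hhigh j h, h.ne']

theorem sandwich_mul_left (f u : Func) (A : MDO) (v : Func) :
    sandwich (f * u) A v = mul (cOp f) (sandwich u A v) :=
  mul_cOp_mul f u _

theorem sandwich_mul_right {N : ℤ} {A : MDO} (hA : OrderLE N A) (u v f : Func) :
    sandwich u A (v * f) = mul (sandwich u A v) (cOp f) := by
  rw [sandwich, sandwich, mul_assoc_of_orderLE (orderLE_cOp u)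
      ((hA.mul (orderLE_cOp v)).mono (add_zero N).le) (orderLE_cOp f),
    mul_assoc_of_orderLE hA (orderLE_cOp v) (orderLE_cOp f), mul_cOp_cOp]

theorem opD_sandwich {N : ℤ} {A : MDO} (hA : OrderLE N A) (i : ℕ) (u v : Func) :
    opD i (sandwich u A v) =
      sandwich (D i u) A v + sandwich u (opD i A) v + sandwich u A (D i v) := by
  rw [sandwich, opD_mul (orderLE_cOp u) ((hA.mul (orderLE_cOp v)).mono (add_zero N).le),
    opD_mul hA (orderLE_cOp v), opD_cOp, opD_cOp, add_assoc,
    mul_add_right (orderLE_cOp u) ((hA.opD i).mul (orderLE_cOp v)) (hA.mul (orderLE_cOp _))]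
  rfl

theorem opD_sandwich_eq {NA NQ NQ' : ℤ} {A Q Q' : MDO} (hA : OrderLE NA A) (hQ : OrderLE NQ Q)
    (hQ' : OrderLE NQ' Q') {n : ℕ} (hlax : opD n A = mul Q A - mul A Q')
    {w₀ w₀' w₁ w₁' δ₀ δ₁ : Func} (hw₀ : w₀ * w₀' = 1) (hw₁ : w₁ * w₁' = 1)
    (hD₀ : D n w₀ = -δ₀ * w₀) (hD₁ : D n w₁' = δ₁ * w₁') :
    opD n (sandwich w₁' A w₀) =
      mul (sandwich w₁' Q w₁ + cOp δ₁) (sandwich w₁' A w₀) -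
        mul (sandwich w₁' A w₀) (sandwich w₀' Q' w₀ + cOp δ₀) := by
  have hS := hA.sandwich w₁' w₀
  rw [opD_sandwich hA, hlax, hD₀, hD₁, sandwich_sub (hQ.mul hA) (hA.mul hQ'), sandwich_mul_left,
    sandwich_mul hQ hA hw₁, sandwich_mul hA hQ' hw₀, mul_comm, sandwich_mul_right hA,
    mul_add_left (hQ.sandwich w₁' w₁) (orderLE_cOp δ₁) hS,
    mul_add_right hS (hQ'.sandwich w₀' w₀) (orderLE_cOp δ₀), cOp_neg, mul_neg_right]
  abel

theorem opD_mul_cOp_eq {NA NQ : ℤ} {A Q : MDO} (hA : OrderLE NA A) (hQ : OrderLE NQ Q) {n : ℕ}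
    (h : opD n A = mul Q A) {w w' δ : Func} (hw : w * w' = 1) (hD : D n w' = δ * w') :
    opD n (mul (cOp w') A) = mul (sandwich w' Q w + cOp δ) (mul (cOp w') A) := by
  rw [opD_mul (orderLE_cOp w') hA, opD_cOp, hD, h, mul_cOp_mul,
    mul_add_left (hQ.sandwich w' w) (orderLE_cOp δ) ((orderLE_cOp w').mul hA), add_comm,
    ← sandwich_one_right hA, ← sandwich_mul hQ hA hw, sandwich_one_right (hQ.mul hA)]

theorem npow_apply_zero_eq_neg_Bc (L : MDO) (n : ℕ) : npow L n 0 = -Bc L n 0 := by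
  simp [Bc, Bop, CmKPPaper.pos]

theorem bmkp_sandwich {N : ℤ} {L : MDO} (hL : OrderLE N L) {w w' : Func} (hw : w * w' = 1)
    (hw' : w' * w = 1) (n : ℕ) :
    Bmkp (sandwich w' L w) n = sandwich w' (Bop L n) w + cOp (npow L n 0) := by
  rw [Bmkp, npow_sandwich hL hw hw', nonneg_sandwich (hL.npow n) hw', Bop]

theorem bcmkp_sandwich {N : ℤ} {L : MDO} (hL : OrderLE N L) {w w' : Func} (hw : w * w' = 1)
    (hw' : w' * w = 1) (n : ℕ) :
    Bcmkp (sandwich w' L w) n = sandwich w' (Bc L n) w + cOp (npow L n 0) := by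
  rw [Bcmkp, bmkp_sandwich hL hw hw', npow_sandwich hL hw hw', Bc,
    sandwich_sub (B := npow L n) (A := Bop L n) ((hL.npow n).pos) (hL.npow n)]
  abel

theorem isLmkp_sandwich {L : MDO} (hL : IsL L) {w w' : Func} (hw' : w' * w = 1)
    (hLw : L 0 * w + dx w = 0) : IsLmkp (sandwich w' L w) := by
  have hL1 : OrderLE 1 L := hL.2
  refine ⟨?_, ?_, (hL1.sandwich w' w)⟩
  · rw [sandwich_apply_of_orderLE hL1, hL.1, mul_one, hw']
  · have h := sandwich_apply_sub_one_of_orderLE hL1 w' w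
    rw [sub_self] at h
    rw [h, hL.1, Int.cast_one, one_mul, one_smul, hLw, mul_zero]

/-- The coefficient of `∂^N` in `L W = W ∂`. -/
theorem apply_zero_mul_add_dx_eq_zero {N : ℤ} {L W : MDO} (hL : IsL L) (hW : OrderLE N W)
    (hLW : mul L W = mul W del) : L 0 * W N + dx (W N) = 0 := by
  have h := congrFun hLW (1 + N - 1)
  rw [mul_apply_add_sub_one_of_orderLE hL.2 hW, mul_del_right, hL.1] at h
  rw [show 1 + N - 1 = N by ring, show (1 : ℤ) - 1 = 0 by rfl, Int.cast_one, one_smul] at h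
  linear_combination h

theorem D_apply_of_opD_eq_mul {N : ℤ} {W X : MDO} (hW : OrderLE N W) (hX : OrderLE 0 X) {n : ℕ}
    (h : opD n W = mul X W) : D n (W N) = X 0 * W N := by
  have h := congrFun h (0 + N)
  rwa [mul_apply_add_of_orderLE hX hW, zero_add] at h

section Gauge

variable {S : Set ℤ} {nn : ℤ → ℤ} {L P W : ℤ → MDO}

theorem CmKPSol.orderLE_L (hsol : CmKPSol S nn L P) {s : ℤ} (hs : s ∈ S) : OrderLE 1 (L s) :=
  (hsol.hL s hs).2

theorem CmKPSol.orderLE_P (hsol : CmKPSol S nn L P) {s : ℤ} (hs : s ∈ S) (hs₁ : s + 1 ∈ S) :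
    OrderLE (nn (s + 1) - nn s) (P s) :=
  hsol.hPhigh s hs hs₁

theorem CmKPDress.orderLE (hW : CmKPDress S nn L P W) {s : ℤ} (hs : s ∈ S) :
    OrderLE (nn s) (W s) :=
  hW.hform s hs

theorem CmKPDress.inverse_mul_leading (hW : CmKPDress S nn L P W) {s : ℤ} (hs : s ∈ S) :
    Ring.inverse (W s (nn s)) * W s (nn s) = 1 :=
  Ring.inverse_mul_cancel _ (hW.hw0 s hs)

theorem CmKPDress.leading_mul_inverse (hW : CmKPDress S nn L P W) {s : ℤ} (hs : s ∈ S) :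
    W s (nn s) * Ring.inverse (W s (nn s)) = 1 :=
  Ring.mul_inverse_cancel _ (hW.hw0 s hs)

theorem CmKPDress.D_leading (hW : CmKPDress S nn L P W) {s : ℤ} (hs : s ∈ S) {n : ℕ}
    (hn : 1 ≤ n) : D n (W s (nn s)) = -npow (L s) n 0 * W s (nn s) := by
  rw [D_apply_of_opD_eq_mul (hW.orderLE hs) (orderLE_Bc (L s) n) (hW.hDW s hs n hn),
    npow_apply_zero_eq_neg_Bc, neg_neg]

theorem CmKPDress.D_inverse_leading (hW : CmKPDress S nn L P W) {s : ℤ} (hs : s ∈ S) {n : ℕ}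
    (hn : 1 ≤ n) :
    D n (Ring.inverse (W s (nn s))) = npow (L s) n 0 * Ring.inverse (W s (nn s)) := by
  rw [D_ringInverse (hW.hw0 s hs) (hW.D_leading hs hn), neg_neg]

theorem CmKPDress.P_leading_mul (hsol : CmKPSol S nn L P) (hW : CmKPDress S nn L P W) {s : ℤ}
    (hs : s ∈ S) (hs₁ : s + 1 ∈ S) :
    P s (nn (s + 1) - nn s) * W s (nn s) = W (s + 1) (nn (s + 1)) := by
  rw [← mul_apply_add_of_orderLE (hsol.orderLE_P hs hs₁) (hW.orderLE hs), ← hW.hPW s hs hs₁]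
  ring_nf

theorem CmKPDress.mkpSol (hsol : CmKPSol S nn L P) (hW : CmKPDress S nn L P W) :
    MkpSol S nn (fun s => sandwich (Ring.inverse (W s (nn s))) (L s) (W s (nn s)))
      (fun s => sandwich (Ring.inverse (W (s + 1) (nn (s + 1)))) (P s) (W s (nn s))) where
  consec := hsol.consec
  hmono := hsol.hmono
  hL s hs := isLmkp_sandwich (hsol.hL s hs) (hW.inverse_mul_leading hs)
    (apply_zero_mul_add_dx_eq_zero (hsol.hL s hs) (hW.orderLE hs) (hW.hLW s hs))
  hPhigh s hs hs₁ := (hsol.orderLE_P hs hs₁).sandwich _ _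
  hPlow s hs hs₁ _ hj :=
    sandwich_apply_of_neg (hsol.orderLE_P hs hs₁) (hsol.hPlow s hs hs₁) _ _ hj
  hPmonic s hs hs₁ := by
    rw [sandwich_apply_of_orderLE (hsol.orderLE_P hs hs₁), mul_assoc,
      hW.P_leading_mul hsol hs hs₁,
      hW.inverse_mul_leading hs₁]
  lax s hs n hn := by
    have hL := (hsol.orderLE_L hs)
    rw [opD_sandwich_eq hL (hL.Bop n) (hL.Bop n) (hsol.lax s hs n hn)
      (hW.leading_mul_inverse hs) (hW.leading_mul_inverse hs) (hW.D_leading hs hn)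
      (hW.D_inverse_leading hs hn),
      ← bmkp_sandwich hL (hW.leading_mul_inverse hs) (hW.inverse_mul_leading hs)]
    rfl
  inter s hs hs₁ := by
    rw [← sandwich_mul (hsol.orderLE_L hs₁) (hsol.orderLE_P hs hs₁)
        (hW.leading_mul_inverse hs₁),
      hsol.inter s hs hs₁,
      sandwich_mul (hsol.orderLE_P hs hs₁) (hsol.orderLE_L hs) (hW.leading_mul_inverse hs)]
  evol s hs hs₁ n hn := by
    have hL := (hsol.orderLE_L hs)
    have hL₁ := (hsol.orderLE_L hs₁)
    rw [opD_sandwich_eq (hsol.orderLE_P hs hs₁) (hL₁.Bop n) (hL.Bop n)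
      (hsol.evol s hs hs₁ n hn) (hW.leading_mul_inverse hs) (hW.leading_mul_inverse hs₁)
      (hW.D_leading hs hn) (hW.D_inverse_leading hs₁ hn),
      ← bmkp_sandwich hL (hW.leading_mul_inverse hs) (hW.inverse_mul_leading hs),
      ← bmkp_sandwich hL₁ (hW.leading_mul_inverse hs₁) (hW.inverse_mul_leading hs₁)]

theorem CmKPDress.mkpDress (hsol : CmKPSol S nn L P) (hW : CmKPDress S nn L P W) :
    MkpDress S nn (fun s => sandwich (Ring.inverse (W s (nn s))) (L s) (W s (nn s)))
      (fun s => sandwich (Ring.inverse (W (s + 1) (nn (s + 1)))) (P s) (W s (nn s)))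
      (fun s => mul (cOp (Ring.inverse (W s (nn s)))) (W s)) where
  hform s hs := ((orderLE_cOp _).mul (hW.orderLE hs)).mono (zero_add _).le
  htop s hs := by simp only [mul_cOp_left]; exact hW.inverse_mul_leading hs
  hLW s hs := by
    rw [← sandwich_one_right (hW.orderLE hs),
      ← sandwich_mul (hsol.orderLE_L hs) (hW.orderLE hs) (hW.leading_mul_inverse hs),
      hW.hLW s hs, sandwich_one_right ((hW.orderLE hs).mul orderLE_del),
      sandwich_one_right (hW.orderLE hs),
      mul_assoc_of_orderLE (orderLE_cOp _) (hW.orderLE hs) orderLE_del]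
  hPW s hs hs₁ := by
    rw [← sandwich_one_right (hW.orderLE hs),
      ← sandwich_mul (hsol.orderLE_P hs hs₁) (hW.orderLE hs) (hW.leading_mul_inverse hs),
      hW.hPW s hs hs₁, sandwich_one_right (hW.orderLE hs₁)]
  hDW s hs n hn := by
    rw [opD_mul_cOp_eq (hW.orderLE hs) (orderLE_Bc (L s) n) (hW.hDW s hs n hn)
      (hW.leading_mul_inverse hs) (hW.D_inverse_leading hs hn),
      bcmkp_sandwich (hsol.orderLE_L hs) (hW.leading_mul_inverse hs) (hW.inverse_mul_leading hs)]

end Gauge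

/-- if `(L(s), P(s))_{s∈S}` is a solution of the cmKP hierarchy
with dressing operator `W(s)` with leading coefficient `w₀(s)`, then
`L^mkp(s) = w₀(s)⁻¹ L(s) w₀(s)`, `P^mkp(s) = w₀(s+1)⁻¹ P(s) w₀(s)` is a
solution of the mKP hierarchy and `W^mkp(s) = w₀(s)⁻¹ W(s)` is its dressing
operator. -/
theorem cmkp_to_mkp_gauge (S : Set ℤ) (nn : ℤ → ℤ) (L P W : ℤ → MDO)
    (hsol : CmKPSol S nn L P) (hdress : CmKPDress S nn L P W) :
    MkpSol S nn
      (fun s => mul (cOp (Ring.inverse (W s (nn s)))) (mul (L s) (cOp (W s (nn s)))))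
      (fun s => mul (cOp (Ring.inverse (W (s + 1) (nn (s + 1)))))
        (mul (P s) (cOp (W s (nn s))))) ∧
    MkpDress S nn
      (fun s => mul (cOp (Ring.inverse (W s (nn s)))) (mul (L s) (cOp (W s (nn s)))))
      (fun s => mul (cOp (Ring.inverse (W (s + 1) (nn (s + 1)))))
        (mul (P s) (cOp (W s (nn s)))))
      (fun s => mul (cOp (Ring.inverse (W s (nn s)))) (W s)) :=
  ⟨hdress.mkpSol hsol, hdress.mkpDress hsol⟩

end CmKPPaper
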